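/- arXiv:1605.04851 — 2 statements merged into one kernel-verified Lean document; each statement's English description precedes it below -/
import Mathlib

section
/- If a pair (E₁,E₂) is achievable by γ-almost-fixed-length tests, then the triple (E₁,E₂,γ) is achievable by fixed-length tests with rejection. -/
open Real Filter Finset MeasureTheory
open scoped Classical

variable {𝒳 : Type*} [Fintype 𝒳] [DecidableEq 𝒳] [Nonempty 𝒳]

/-- Kullback–Leibler divergence `D(Q‖P)` between pmfs on a finite alphabet. -/
noncomputable def kl (Q P : 𝒳 → ℝ) : ℝ :=
  ∑ x, Q x * Real.log (Q x / P x)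

/-- The `λ`-tilted distribution `P^(λ)` of `P₁` and `P₂`. -/
noncomputable def tilt (P₁ P₂ : 𝒳 → ℝ) (l : ℝ) : 𝒳 → ℝ :=
  fun x => P₁ x ^ (1 - l) * P₂ x ^ l / ∑ a, P₁ a ^ (1 - l) * P₂ a ^ l

/-- Probability of a set of length-`N` sample paths under i.i.d. sampling from `P`. -/
noncomputable def prodProb (P : 𝒳 → ℝ) {N : ℕ} (S : Set (Fin N → 𝒳)) : ℝ :=
  ∑ ω : Fin N → 𝒳, S.indicator (fun ω' => ∏ i, P (ω' i)) ω

/-- The fixed-length error-exponent region `R_FD`. -/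
def RFD (P₁ P₂ : 𝒳 → ℝ) : Set (ℝ × ℝ) :=
  {p | 0 ≤ p.1 ∧ 0 ≤ p.2 ∧
    ∃ l ∈ Set.Icc (0:ℝ) 1,
      p.1 ≤ kl (tilt P₁ P₂ l) P₁ ∧ p.2 ≤ kl (tilt P₁ P₂ l) P₂}

/-- `E₁(γ) = max{D(P^(λ)‖P₁) : λ ∈ [0,1], D(P^(λ)‖P₂) ≥ γ}` (sup of the empty set is 0). -/
noncomputable def E1exp (P₁ P₂ : 𝒳 → ℝ) (γ : ℝ) : ℝ :=
  sSup {E | ∃ l ∈ Set.Icc (0:ℝ) 1, γ ≤ kl (tilt P₁ P₂ l) P₂ ∧ E = kl (tilt P₁ P₂ l) P₁}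

/-- `E₂(γ) = max{D(P^(λ)‖P₂) : λ ∈ [0,1], D(P^(λ)‖P₁) ≥ γ}` (sup of the empty set is 0). -/
noncomputable def E2exp (P₁ P₂ : 𝒳 → ℝ) (γ : ℝ) : ℝ :=
  sSup {E | ∃ l ∈ Set.Icc (0:ℝ) 1, γ ≤ kl (tilt P₁ P₂ l) P₁ ∧ E = kl (tilt P₁ P₂ l) P₂}

/-- A sequential hypothesis test whose stopping time is bounded by `N`:
a stopping time `τ` for the coordinate filtration, together with decision events
`A1`, `A2` that are determined by the samples observed up to time `τ`,
are disjoint, and exhaust the sample space. -/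
structure HypTest (𝒳 : Type*) (N : ℕ) where
  τ : (Fin N → 𝒳) → ℕ
  A1 : Set (Fin N → 𝒳)
  A2 : Set (Fin N → 𝒳)
  tau_le : ∀ ω, τ ω ≤ N
  stopping : ∀ ω ω', (∀ i : Fin N, (i : ℕ) < τ ω → ω i = ω' i) → τ ω' = τ ω
  adapted1 : ∀ ω ω', (∀ i : Fin N, (i : ℕ) < τ ω → ω i = ω' i) → (ω ∈ A1 ↔ ω' ∈ A1)
  adapted2 : ∀ ω ω', (∀ i : Fin N, (i : ℕ) < τ ω → ω i = ω' i) → (ω ∈ A2 ↔ ω' ∈ A2)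
  disj : Disjoint A1 A2
  exhaust : A1 ∪ A2 = Set.univ

/-- `(E₁, E₂)` is achievable by `γ`-almost-fixed-length tests. -/
def AFLAchievable (P₁ P₂ : 𝒳 → ℝ) (γ E₁ E₂ : ℝ) : Prop :=
  0 ≤ E₁ ∧ 0 ≤ E₂ ∧
  ∃ c : ℝ, 0 < c ∧ ∃ l : ℕ, 0 < l ∧
    ∀ δ : ℝ, 0 < δ → ∃ n₀ : ℕ, ∀ n : ℕ, n₀ ≤ n →
      ∃ N : ℕ, (N : ℝ) ≤ c * (n : ℝ) ^ l ∧
        ∃ T : HypTest 𝒳 N,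
          prodProb P₁ {ω | n < T.τ ω} ≤ Real.exp (-(γ * n)) ∧
          prodProb P₂ {ω | n < T.τ ω} ≤ Real.exp (-(γ * n)) ∧
          prodProb P₁ T.A2 ≤ Real.exp (-((E₁ - δ) * n)) ∧
          prodProb P₂ T.A1 ≤ Real.exp (-((E₂ - δ) * n))

/-- `(E₁, E₂, E_Ω)` is achievable by fixed-length tests with a rejection option. -/
def RejAchievable (P₁ P₂ : 𝒳 → ℝ) (E₁ E₂ EΩ : ℝ) : Prop :=
  0 ≤ E₁ ∧ 0 ≤ E₂ ∧ 0 ≤ EΩ ∧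
  ∀ δ : ℝ, 0 < δ → ∃ n₀ : ℕ, ∀ n : ℕ, n₀ ≤ n →
    ∃ A1 A2 AΩ : Set (Fin n → 𝒳),
      Disjoint A1 A2 ∧ Disjoint A1 AΩ ∧ Disjoint A2 AΩ ∧ A1 ∪ A2 ∪ AΩ = Set.univ ∧
      prodProb P₁ A2 ≤ Real.exp (-((E₁ - δ) * n)) ∧
      prodProb P₂ A1 ≤ Real.exp (-((E₂ - δ) * n)) ∧
      prodProb P₁ AΩ + prodProb P₂ AΩ ≤ Real.exp (-((EΩ - δ) * n))

/-- Sum of the log-likelihood ratios of the first `n` samples. -/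
noncomputable def S1 (P₁ P₂ : 𝒳 → ℝ) (n : ℕ) {N : ℕ} (ω : Fin N → 𝒳) : ℝ :=
  ∑ i ∈ Finset.univ.filter (fun i : Fin N => (i : ℕ) < n),
    Real.log (P₁ (ω i) / P₂ (ω i))

/-- Sum of the log-likelihood ratios of the samples after time `n`. -/
noncomputable def S2 (P₁ P₂ : 𝒳 → ℝ) (n : ℕ) {N : ℕ} (ω : Fin N → 𝒳) : ℝ :=
  ∑ i ∈ Finset.univ.filter (fun i : Fin N => n ≤ (i : ℕ)),
    Real.log (P₁ (ω i) / P₂ (ω i))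

/-- Event that the two-phase test (phase-one thresholds `α₁ > β₁`, phase-two threshold `α`)
chooses `H₁`. -/
def twoPhaseA1 (P₁ P₂ : 𝒳 → ℝ) (k n : ℕ) (α₁ β₁ α : ℝ) : Set (Fin ((k + 1) * n) → 𝒳) :=
  {ω | α₁ ≤ S1 P₁ P₂ n ω / n ∨
    (β₁ < S1 P₁ P₂ n ω / n ∧ S1 P₁ P₂ n ω / n < α₁ ∧ α ≤ S2 P₁ P₂ n ω / (k * n))}

/-- Event that the two-phase test chooses `H₂`. -/
def twoPhaseA2 (P₁ P₂ : 𝒳 → ℝ) (k n : ℕ) (α₁ β₁ α : ℝ) : Set (Fin ((k + 1) * n) → 𝒳) :=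
  {ω | S1 P₁ P₂ n ω / n ≤ β₁ ∨
    (β₁ < S1 P₁ P₂ n ω / n ∧ S1 P₁ P₂ n ω / n < α₁ ∧ S2 P₁ P₂ n ω / (k * n) < α)}

/-- Stopping time of the two-phase test: `n` if phase one is decisive, `(k+1)n` otherwise. -/
noncomputable def twoPhaseTau (P₁ P₂ : 𝒳 → ℝ) (k n : ℕ) (α₁ β₁ : ℝ)
    (ω : Fin ((k + 1) * n) → 𝒳) : ℕ :=
  if β₁ < S1 P₁ P₂ n ω / n ∧ S1 P₁ P₂ n ω / n < α₁ then (k + 1) * n else n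

/-! Run the almost-fixed-length test on the first `n` samples only: decide as it does whenever
it stops by time `n`, and reject otherwise. Events that only depend on the first `n` samples
have the same probability whether the i.i.d. path has length `n` (padded by a fixed symbol) or
the length of the test, because the remaining coordinates marginalise out. So the error
probabilities can only decrease, and the rejection probability is `P₁(τ > n) + P₂(τ > n) ≤
2 e^{-γn}`, where the factor `2` is absorbed into the slack `δ`. -/

section Prefix

variable {α : Type*}

def DependsOnPrefix (m : ℕ) {N : ℕ} (A : Set (Fin N → α)) : Prop :=
  ∀ ω ω' : Fin N → α, (∀ i : Fin N, (i : ℕ) < m → ω i = ω' i) → (ω ∈ A ↔ ω' ∈ A)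

/-- Pads with `x₀` when `m < M`, truncates when `M < m`. -/
def extPad (x₀ : α) {m M : ℕ} (ρ : Fin m → α) : Fin M → α :=
  fun i => if h : (i : ℕ) < m then ρ ⟨i, h⟩ else x₀

theorem extPad_apply_of_lt (x₀ : α) {m M : ℕ} (ρ : Fin m → α) {i : Fin M} (hi : (i : ℕ) < m) :
    extPad x₀ ρ i = ρ ⟨i, hi⟩ :=
  dif_pos hi

theorem extPad_extPad (x₀ : α) {m n N : ℕ} (hmn : m ≤ n) (ρ : Fin m → α) :
    (extPad x₀ (extPad x₀ ρ : Fin n → α) : Fin N → α) = extPad x₀ ρ := by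
  funext i
  unfold extPad
  split_ifs <;> first | rfl | omega

theorem dependsOnPrefix_min_iff {n N : ℕ} {A : Set (Fin N → α)} :
    DependsOnPrefix (min n N) A ↔ DependsOnPrefix n A := by
  have hlt : ∀ i : Fin N, (i : ℕ) < min n N ↔ (i : ℕ) < n := fun i => by
    simp [i.isLt]
  simp only [DependsOnPrefix, hlt]

theorem DependsOnPrefix.preimage_extPad (x₀ : α) {m n N : ℕ} {B : Set (Fin N → α)}
    (hB : DependsOnPrefix m B) (hmn : m ≤ n) :
    DependsOnPrefix m (extPad x₀ ⁻¹' B : Set (Fin n → α)) := by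
  intro ω ω' h
  refine hB _ _ fun i hi => ?_
  have hin : (i : ℕ) < n := hi.trans_le hmn
  rw [extPad_apply_of_lt x₀ ω hin, extPad_apply_of_lt x₀ ω' hin]
  exact h _ hi

end Prefix

section Marginal

variable {α : Type*} [Fintype α] {P : α → ℝ}

theorem prodProb_mono (hP : ∀ x, 0 ≤ P x) {N : ℕ} {S S' : Set (Fin N → α)} (h : S ⊆ S') :
    prodProb P S ≤ prodProb P S' :=
  Finset.sum_le_sum fun _ _ =>
    Set.indicator_le_indicator_of_subset h (fun _ => Finset.prod_nonneg fun _ _ => hP _) _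

theorem prodProb_preimage_extPad (hP : ∑ x, P x = 1) (x₀ : α) {m M : ℕ} (hmM : m ≤ M)
    {A : Set (Fin M → α)} (hA : DependsOnPrefix m A) :
    prodProb P (extPad x₀ ⁻¹' A : Set (Fin m → α)) = prodProb P A := by
  obtain ⟨k, rfl⟩ := Nat.exists_eq_add_of_le hmM
  have hmem : ∀ ρ σ, Fin.append ρ σ ∈ A ↔ extPad x₀ ρ ∈ A := fun ρ σ =>
    hA _ _ fun i hi => by
      rw [extPad_apply_of_lt x₀ ρ hi, ← Fin.append_left ρ σ]
      rfl
  have hsplit : ∀ ρ σ, A.indicator (fun ω => ∏ i, P (ω i)) (Fin.append ρ σ) =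
      (extPad x₀ ⁻¹' A).indicator (fun ρ => ∏ i, P (ρ i)) ρ * ∏ j, P (σ j) := fun ρ σ => by
    simp only [Set.indicator_apply, Set.mem_preimage, hmem, Fin.prod_univ_add, Fin.append_left,
      Fin.append_right, ite_mul, zero_mul]
  calc prodProb P (extPad x₀ ⁻¹' A : Set (Fin m → α))
      = ∑ ρ : Fin m → α, ∑ σ : Fin k → α,
          (extPad x₀ ⁻¹' A).indicator (fun ρ => ∏ i, P (ρ i)) ρ * ∏ j, P (σ j) := by
        simp only [← Finset.mul_sum, ← Fintype.sum_pow, hP, one_pow, mul_one]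
        rfl
    _ = prodProb P A := by
        simp only [← hsplit, ← Fintype.sum_prod_type']
        exact (Fin.appendEquiv m k).sum_comp (A.indicator fun ω => ∏ i, P (ω i))

theorem prodProb_preimage_extPad_of_dependsOnPrefix (hP : ∑ x, P x = 1) (x₀ : α) {n N : ℕ}
    {B : Set (Fin N → α)} (hB : DependsOnPrefix n B) :
    prodProb P (extPad x₀ ⁻¹' B : Set (Fin n → α)) = prodProb P B := by
  have hB' := dependsOnPrefix_min_iff.2 hB
  have hmn : min n N ≤ n := min_le_left n N
  rw [← prodProb_preimage_extPad hP x₀ hmn (hB'.preimage_extPad x₀ hmn),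
    ← prodProb_preimage_extPad hP x₀ (min_le_right n N) hB', ← Set.preimage_comp]
  congr 2
  funext ρ
  exact extPad_extPad x₀ hmn ρ

end Marginal

namespace HypTest

variable {α : Type*} {N : ℕ} (T : HypTest α N)

theorem tau_eq_of_agree {n : ℕ} {ω ω' : Fin N → α}
    (h : ∀ i : Fin N, (i : ℕ) < n → ω i = ω' i) (hτ : T.τ ω ≤ n) : T.τ ω' = T.τ ω :=
  T.stopping ω ω' fun i hi => h i (hi.trans_le hτ)

theorem dependsOnPrefix_inter_tau_le {A : Set (Fin N → α)}
    (hA : ∀ ω ω', (∀ i : Fin N, (i : ℕ) < T.τ ω → ω i = ω' i) → (ω ∈ A ↔ ω' ∈ A)) (n : ℕ) :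
    DependsOnPrefix n (A ∩ {ω | T.τ ω ≤ n}) := by
  have key : ∀ ω ω' : Fin N → α, (∀ i : Fin N, (i : ℕ) < n → ω i = ω' i) →
      ω ∈ A ∩ {ω | T.τ ω ≤ n} → ω' ∈ A ∩ {ω | T.τ ω ≤ n} := by
    rintro ω ω' h ⟨hωA, hτ⟩
    have hτ' := T.tau_eq_of_agree h hτ
    refine ⟨(hA ω ω' fun i hi => h i (hi.trans_le hτ)).1 hωA, ?_⟩
    rwa [Set.mem_ofPred_eq, hτ']
  exact fun ω ω' h => ⟨key ω ω' h, key ω' ω fun i hi => (h i hi).symm⟩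

theorem dependsOnPrefix_lt_tau (n : ℕ) : DependsOnPrefix n {ω | n < T.τ ω} := by
  have key : ∀ ω ω' : Fin N → α, (∀ i : Fin N, (i : ℕ) < n → ω i = ω' i) →
      T.τ ω' ≤ n → T.τ ω ≤ n := fun ω ω' h hτ =>
    (T.tau_eq_of_agree (fun i hi => (h i hi).symm) hτ).le.trans hτ
  intro ω ω' h
  simp only [Set.mem_ofPred_eq, ← not_le]
  exact not_congr ⟨key ω' ω fun i hi => (h i hi).symm, key ω ω' h⟩

theorem exists_fixedLength_rejection_test [Fintype α] (x₀ : α) (n : ℕ) :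
    ∃ A1 A2 AΩ : Set (Fin n → α),
      Disjoint A1 A2 ∧ Disjoint A1 AΩ ∧ Disjoint A2 AΩ ∧ A1 ∪ A2 ∪ AΩ = Set.univ ∧
      ∀ P : α → ℝ, (∀ x, 0 ≤ P x) → ∑ x, P x = 1 →
        prodProb P A1 ≤ prodProb P T.A1 ∧ prodProb P A2 ≤ prodProb P T.A2 ∧
        prodProb P AΩ = prodProb P {ω | n < T.τ ω} := by
  have hsep : ∀ A : Set (Fin N → α), Disjoint (A ∩ {ω | T.τ ω ≤ n}) {ω | n < T.τ ω} :=
    fun A => Set.disjoint_left.2 fun ω h (h' : n < T.τ ω) => (not_lt.2 h.2) h'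
  refine ⟨extPad x₀ ⁻¹' (T.A1 ∩ {ω | T.τ ω ≤ n}), extPad x₀ ⁻¹' (T.A2 ∩ {ω | T.τ ω ≤ n}),
    extPad x₀ ⁻¹' {ω | n < T.τ ω}, ?_, ?_, ?_, ?_, fun P hP hsum => ⟨?_, ?_, ?_⟩⟩
  · exact (T.disj.mono Set.inter_subset_left Set.inter_subset_left).preimage _
  · exact (hsep T.A1).preimage _
  · exact (hsep T.A2).preimage _
  · rw [← Set.preimage_union, ← Set.preimage_union, ← Set.union_inter_distrib_right, T.exhaust,
      Set.univ_inter, ← Set.ofPred_or]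
    simp only [le_or_gt, Set.ofPred_true, Set.preimage_univ]
  · rw [prodProb_preimage_extPad_of_dependsOnPrefix hsum x₀
      (T.dependsOnPrefix_inter_tau_le T.adapted1 n)]
    exact prodProb_mono hP Set.inter_subset_left
  · rw [prodProb_preimage_extPad_of_dependsOnPrefix hsum x₀
      (T.dependsOnPrefix_inter_tau_le T.adapted2 n)]
    exact prodProb_mono hP Set.inter_subset_left
  · exact prodProb_preimage_extPad_of_dependsOnPrefix hsum x₀ (T.dependsOnPrefix_lt_tau n)

end HypTest

theorem eventually_two_mul_exp_le {γ δ : ℝ} (hδ : 0 < δ) :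
    ∀ᶠ n : ℕ in atTop, 2 * Real.exp (-(γ * n)) ≤ Real.exp (-((γ - δ) * n)) := by
  have htend : Tendsto (fun n : ℕ => Real.exp (δ * n)) atTop atTop :=
    Real.tendsto_exp_atTop.comp (tendsto_natCast_atTop_atTop.const_mul_atTop hδ)
  filter_upwards [htend.eventually_ge_atTop 2] with n hn
  calc 2 * Real.exp (-(γ * n)) ≤ Real.exp (δ * n) * Real.exp (-(γ * n)) := by gcongr
    _ = Real.exp (-((γ - δ) * n)) := by rw [← Real.exp_add]; ring_nf

theorem afl_to_rejection_general (P₁ P₂ : 𝒳 → ℝ)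
    (h1pos : ∀ x, 0 < P₁ x) (h2pos : ∀ x, 0 < P₂ x)
    (h1sum : ∑ x, P₁ x = 1) (h2sum : ∑ x, P₂ x = 1)
    (γ : ℝ) (hγ : 0 < γ) (E₁ E₂ : ℝ)
    (hach : AFLAchievable P₁ P₂ γ E₁ E₂) :
    RejAchievable P₁ P₂ E₁ E₂ γ := by
  obtain ⟨hE₁, hE₂, _, _, _, _, hafl⟩ := hach
  refine ⟨hE₁, hE₂, hγ.le, fun δ hδ => ?_⟩
  obtain ⟨n₀, hn₀⟩ := hafl δ hδ
  obtain ⟨n₁, hn₁⟩ := eventually_atTop.1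
    ((eventually_ge_atTop n₀).and (eventually_two_mul_exp_le (γ := γ) hδ))
  refine ⟨n₁, fun n hn => ?_⟩
  obtain ⟨hn₀n, hexp⟩ := hn₁ n hn
  obtain ⟨N, -, T, hτ₁, hτ₂, hA₂, hA₁⟩ := hn₀ n hn₀n
  obtain ⟨A1, A2, AΩ, h12, h1Ω, h2Ω, hcover, hP⟩ :=
    T.exists_fixedLength_rejection_test (Classical.arbitrary 𝒳) n
  obtain ⟨-, hA₂', hΩ₁⟩ := hP P₁ (fun x => (h1pos x).le) h1sum
  obtain ⟨hA₁', -, hΩ₂⟩ := hP P₂ (fun x => (h2pos x).le) h2sum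
  refine ⟨A1, A2, AΩ, h12, h1Ω, h2Ω, hcover, hA₂'.trans hA₂, hA₁'.trans hA₁, ?_⟩
  rw [hΩ₁, hΩ₂]
  linarith

/-- If `(E₁,E₂)` is achievable by γ-almost-fixed-length tests, then `(E₁,E₂,γ)`
is achievable by fixed-length tests with rejection. -/
theorem afl_to_rejection (P₁ P₂ : 𝒳 → ℝ)
    (h1pos : ∀ x, 0 < P₁ x) (h2pos : ∀ x, 0 < P₂ x)
    (h1sum : ∑ x, P₁ x = 1) (h2sum : ∑ x, P₂ x = 1)
    (hne : P₁ ≠ P₂)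
    (γ : ℝ) (hγ : 0 < γ) (E₁ E₂ : ℝ)
    (hach : AFLAchievable P₁ P₂ γ E₁ E₂) :
    RejAchievable P₁ P₂ E₁ E₂ γ :=
  afl_to_rejection_general P₁ P₂ h1pos h2pos h1sum h2sum γ hγ E₁ E₂ hach
end

section
/- If a triple (E₁,E₂,γ) with γ > 0 is achievable by fixed-length tests with rejection, then the pair (E₁,E₂) is achievable by γ-almost-fixed-length tests. -/
open Real Filter Finset MeasureTheory
open scoped Classical

variable {𝒳 : Type*} [Fintype 𝒳] [DecidableEq 𝒳] [Nonempty 𝒳]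

/-!
If `(E₁, E₂, γ)` is achievable with rejection then, for every tilted law `P^(λ)`,
`E₁ ≤ D(P^(λ)‖P₁)`, `E₂ ≤ D(P^(λ)‖P₂)` or `γ ≤ min (D(P^(λ)‖P₁), D(P^(λ)‖P₂))`: otherwise a change
of measure to `P^(λ)` on its typical sequences would make all three decision regions unlikely
under `P^(λ)`. Continuity in `λ` then gives `λa, λb` with `E₂ ≤ D(P^(λa)‖P₂)` and
`E₁ ≤ D(P^(λb)‖P₁)` such that either the `P^(λ)`-means `t(λ)` of `log (P₁ / P₂)` satisfy
`t(λa) ≤ t(λb)`, or `γ ≤ D(P^(λa)‖P₁)` and `γ ≤ D(P^(λb)‖P₂)`. The test compares the empirical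
mean of `log (P₁ / P₂)` over the first `n` samples with `t(λa)` and `t(λb)`, and Chernoff bounds
for the tilted family give its exponents. In the second case the mean may fall strictly between
`t(λb)` and `t(λa)`, which has probability at most `e^{-γ n}` under both hypotheses; the test then
draws `k n` further samples and compares their likelihoods, erring with probability at most
`ρ^{k n}`, where `ρ = ∑ √(P₁ P₂) < 1`.
-/

section

omit [DecidableEq 𝒳] [Nonempty 𝒳]

open Topology

namespace prodProb

variable {P : 𝒳 → ℝ} {N : ℕ}

lemma nonneg (hP : ∀ x, 0 ≤ P x) (S : Set (Fin N → 𝒳)) : 0 ≤ prodProb P S :=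
  Finset.sum_nonneg fun _ _ => Set.indicator_nonneg (fun _ _ => prod_nonneg fun _ _ => hP _) _

lemma mono (hP : ∀ x, 0 ≤ P x) {S T : Set (Fin N → 𝒳)} (h : S ⊆ T) :
    prodProb P S ≤ prodProb P T :=
  Finset.sum_le_sum fun _ _ =>
    Set.indicator_le_indicator_of_subset h (fun _ => prod_nonneg fun _ _ => hP _) _

lemma union_le (hP : ∀ x, 0 ≤ P x) (S T : Set (Fin N → 𝒳)) :
    prodProb P (S ∪ T) ≤ prodProb P S + prodProb P T := by
  rw [prodProb, prodProb, prodProb, ← Finset.sum_add_distrib]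
  refine Finset.sum_le_sum fun ω _ => ?_
  have h0 : 0 ≤ ∏ i, P (ω i) := prod_nonneg fun _ _ => hP _
  by_cases hS : ω ∈ S <;> by_cases hT : ω ∈ T <;> simp [hS, hT, h0]

lemma union_le_union (hP : ∀ x, 0 ≤ P x) {S T U : Set (Fin N → 𝒳)} (h : S ⊆ T ∪ U) :
    prodProb P S ≤ prodProb P T + prodProb P U :=
  (mono hP h).trans (union_le hP T U)

lemma univ_eq_one (hsum : ∑ x, P x = 1) : prodProb P (Set.univ : Set (Fin N → 𝒳)) = 1 := by
  simp [prodProb, ← Fintype.prod_sum, hsum]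

lemma one_le_add_add (hP : ∀ x, 0 ≤ P x) (hsum : ∑ x, P x = 1) {A B C : Set (Fin N → 𝒳)}
    (h : A ∪ B ∪ C = Set.univ) : 1 ≤ prodProb P A + prodProb P B + prodProb P C := by
  rw [← univ_eq_one hsum (N := N), ← h]
  linarith [union_le hP (A ∪ B) C, union_le hP A B]

lemma le_sum_of_le {S : Set (Fin N → 𝒳)} {F : (Fin N → 𝒳) → ℝ} (hF : ∀ ω, 0 ≤ F ω)
    (h : ∀ ω ∈ S, ∏ i, P (ω i) ≤ F ω) : prodProb P S ≤ ∑ ω, F ω :=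
  Finset.sum_le_sum fun ω _ => by
    by_cases hω : ω ∈ S
    · simpa [hω] using h ω hω
    · simpa [hω] using hF ω

lemma le_mgf_pow_of_nonneg_sum (hP : ∀ x, 0 ≤ P x) (hsum : ∑ x, P x = 1) (ψ : 𝒳 → ℝ)
    (I : Finset (Fin N)) {S : Set (Fin N → 𝒳)} (hS : ∀ ω ∈ S, 0 ≤ ∑ i ∈ I, ψ (ω i)) :
    prodProb P S ≤ (∑ x, P x * exp (ψ x)) ^ I.card := by
  set F : Fin N → 𝒳 → ℝ := fun i x => P x * if i ∈ I then exp (ψ x) else 1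
  calc prodProb P S ≤ ∑ ω : Fin N → 𝒳, ∏ i, F i (ω i) := by
        refine le_sum_of_le (fun ω => prod_nonneg fun i _ => ?_) fun ω hω => ?_
        · exact mul_nonneg (hP _) (by split_ifs <;> positivity)
        · rw [Finset.prod_mul_distrib, Finset.prod_ite_mem, univ_inter, ← exp_sum]
          exact le_mul_of_one_le_right (prod_nonneg fun _ _ => hP _) (one_le_exp (hS ω hω))
    _ = (∑ x, P x * exp (ψ x)) ^ I.card := by
        rw [← Fintype.prod_sum]
        simp only [F, mul_ite, mul_one, Finset.sum_ite_irrel, hsum]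
        rw [Finset.prod_ite_mem, univ_inter, prod_const]

end prodProb

lemma card_filter_val_lt_of_le {N n : ℕ} (hnN : n ≤ N) :
    (Finset.univ.filter fun i : Fin N => (i : ℕ) < n).card = n := by
  rw [Fin.card_filter_val_lt, min_eq_right hnN]

lemma card_filter_le_val {N n : ℕ} (hnN : n ≤ N) :
    (Finset.univ.filter fun i : Fin N => n ≤ (i : ℕ)).card = N - n := by
  have h := Finset.card_filter_add_card_filter_not (s := (Finset.univ : Finset (Fin N)))
    (fun i : Fin N => (i : ℕ) < n)
  simp only [not_lt, Fin.card_filter_val_lt, Finset.card_univ, Fintype.card_fin] at h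
  omega

noncomputable def expTilt (P φ : 𝒳 → ℝ) : 𝒳 → ℝ :=
  fun x => P x * exp (φ x) / ∑ a, P a * exp (φ a)

section expTilt

variable [Nonempty 𝒳] {P : 𝒳 → ℝ} (hP : ∀ x, 0 < P x) (φ : 𝒳 → ℝ)
include hP

lemma sum_mul_exp_pos : 0 < ∑ a, P a * exp (φ a) :=
  Finset.sum_pos (fun a _ => mul_pos (hP a) (exp_pos _)) univ_nonempty

lemma expTilt_pos (x : 𝒳) : 0 < expTilt P φ x :=
  div_pos (mul_pos (hP x) (exp_pos _)) (sum_mul_exp_pos hP φ)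

lemma sum_expTilt : ∑ x, expTilt P φ x = 1 := by
  simp only [expTilt]
  rw [← Finset.sum_div, div_self (sum_mul_exp_pos hP φ).ne']

lemma kl_expTilt :
    kl (expTilt P φ) P = ∑ x, expTilt P φ x * φ x - log (∑ a, P a * exp (φ a)) := by
  have hlog : ∀ x, log (expTilt P φ x / P x) = φ x - log (∑ a, P a * exp (φ a)) := fun x => by
    rw [expTilt, div_right_comm, mul_div_cancel_left₀ _ (hP x).ne',
      log_div (exp_pos _).ne' (sum_mul_exp_pos hP φ).ne', log_exp]
  simp only [kl, hlog, mul_sub, Finset.sum_sub_distrib, ← Finset.sum_mul, sum_expTilt hP, one_mul]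

lemma sum_mul_exp_sub_mean :
    ∑ x, P x * exp (φ x - ∑ a, expTilt P φ a * φ a) = exp (-kl (expTilt P φ) P) := by
  rw [kl_expTilt hP, neg_sub, exp_sub, exp_log (sum_mul_exp_pos hP φ), div_eq_mul_inv,
    Finset.sum_mul]
  simp only [exp_sub, ← exp_neg, div_eq_mul_inv, mul_assoc]

/-- Chernoff's bound with parameter `1`: the moment generating function of
`φ - E_{expTilt P φ} φ` under `P` at `1` is exactly `e^{-D(expTilt P φ ‖ P)}`. -/
lemma prodProb_le_exp_neg_kl_expTilt (hsum : ∑ x, P x = 1) {N : ℕ} (I : Finset (Fin N))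
    {S : Set (Fin N → 𝒳)}
    (hS : ∀ ω ∈ S, I.card * ∑ x, expTilt P φ x * φ x ≤ ∑ i ∈ I, φ (ω i)) :
    prodProb P S ≤ exp (-(kl (expTilt P φ) P * I.card)) := by
  have h := prodProb.le_mgf_pow_of_nonneg_sum (fun x => (hP x).le) hsum
    (fun x => φ x - ∑ a, expTilt P φ a * φ a) I (S := S) fun ω hω => by
      rw [Finset.sum_sub_distrib, Finset.sum_const, nsmul_eq_mul]
      exact sub_nonneg.2 (hS ω hω)
  rwa [sum_mul_exp_sub_mean hP, ← exp_nat_mul, mul_neg, mul_comm] at h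

end expTilt

lemma rpow_one_sub_mul_rpow_eq_mul_exp_left {p q : ℝ} (hp : 0 < p) (hq : 0 < q) (l : ℝ) :
    p ^ (1 - l) * q ^ l = p * exp (-(l * log (p / q))) := by
  calc p ^ (1 - l) * q ^ l = exp (log p + -(l * (log p - log q))) := by
        rw [rpow_def_of_pos hp, rpow_def_of_pos hq, ← exp_add]; ring_nf
    _ = _ := by rw [exp_add, exp_log hp, log_div hp.ne' hq.ne']

lemma rpow_one_sub_mul_rpow_eq_mul_exp_right {p q : ℝ} (hp : 0 < p) (hq : 0 < q) (l : ℝ) :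
    p ^ (1 - l) * q ^ l = q * exp ((1 - l) * log (p / q)) := by
  calc p ^ (1 - l) * q ^ l = exp (log q + (1 - l) * (log p - log q)) := by
        rw [rpow_def_of_pos hp, rpow_def_of_pos hq, ← exp_add]; ring_nf
    _ = _ := by rw [exp_add, exp_log hq, log_div hp.ne' hq.ne']

noncomputable def tiltedMeanLLR (P₁ P₂ : 𝒳 → ℝ) (l : ℝ) : ℝ :=
  ∑ x, tilt P₁ P₂ l x * log (P₁ x / P₂ x)

lemma tilt_zero {P₁ P₂ : 𝒳 → ℝ} (h1sum : ∑ x, P₁ x = 1) : tilt P₁ P₂ 0 = P₁ := by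
  funext x; simp [tilt, h1sum]

lemma tilt_one {P₁ P₂ : 𝒳 → ℝ} (h2sum : ∑ x, P₂ x = 1) : tilt P₁ P₂ 1 = P₂ := by
  funext x; simp [tilt, h2sum]

lemma kl_self {P : 𝒳 → ℝ} (hP : ∀ x, 0 < P x) : kl P P = 0 :=
  Finset.sum_eq_zero fun x _ => by rw [div_self (hP x).ne', log_one, mul_zero]

section tilt

variable {P₁ P₂ : 𝒳 → ℝ} (h1pos : ∀ x, 0 < P₁ x) (h2pos : ∀ x, 0 < P₂ x)
include h1pos h2pos

lemma tilt_eq_expTilt_left (l : ℝ) :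
    tilt P₁ P₂ l = expTilt P₁ fun x => -(l * log (P₁ x / P₂ x)) := by
  funext x
  simp only [tilt, expTilt, rpow_one_sub_mul_rpow_eq_mul_exp_left (h1pos _) (h2pos _)]

lemma tilt_eq_expTilt_right (l : ℝ) :
    tilt P₁ P₂ l = expTilt P₂ fun x => (1 - l) * log (P₁ x / P₂ x) := by
  funext x
  simp only [tilt, expTilt, rpow_one_sub_mul_rpow_eq_mul_exp_right (h1pos _) (h2pos _)]

lemma tilt_pos [Nonempty 𝒳] (l : ℝ) (x : 𝒳) : 0 < tilt P₁ P₂ l x := by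
  rw [tilt_eq_expTilt_left h1pos h2pos]; exact expTilt_pos h1pos _ x

lemma sum_tilt [Nonempty 𝒳] (l : ℝ) : ∑ x, tilt P₁ P₂ l x = 1 := by
  rw [tilt_eq_expTilt_left h1pos h2pos]; exact sum_expTilt h1pos _

lemma continuous_kl_tilt [Nonempty 𝒳] {P : 𝒳 → ℝ} (hP : ∀ x, 0 < P x) :
    Continuous fun l => kl (tilt P₁ P₂ l) P := by
  have hcont : ∀ x, Continuous fun l => tilt P₁ P₂ l x := fun x => by
    simp only [tilt_eq_expTilt_left h1pos h2pos, expTilt]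
    exact Continuous.div (by fun_prop) (by fun_prop) fun l => (sum_mul_exp_pos h1pos _).ne'
  exact continuous_finsetSum _ fun x _ => (hcont x).mul
    (((hcont x).div_const _).log fun l => (div_pos (tilt_pos h1pos h2pos l x) (hP x)).ne')

variable {N n : ℕ} (hn : 0 < n) (hnN : n ≤ N) {l : ℝ}
include hn hnN

lemma prodProb_S1_div_le_tiltedMeanLLR [Nonempty 𝒳] (h1sum : ∑ x, P₁ x = 1) (hl : 0 ≤ l) :
    prodProb P₁ {ω : Fin N → 𝒳 | S1 P₁ P₂ n ω / n ≤ tiltedMeanLLR P₁ P₂ l}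
      ≤ exp (-(kl (tilt P₁ P₂ l) P₁ * n)) := by
  have hcard := card_filter_val_lt_of_le hnN
  have h := prodProb_le_exp_neg_kl_expTilt h1pos (fun x => -(l * log (P₁ x / P₂ x))) h1sum
    (Finset.univ.filter fun i : Fin N => (i : ℕ) < n)
    (S := {ω | S1 P₁ P₂ n ω / n ≤ tiltedMeanLLR P₁ P₂ l}) fun ω (hω : _ / (n : ℝ) ≤ _) => by
      have hS : S1 P₁ P₂ n ω ≤ n * tiltedMeanLLR P₁ P₂ l :=
        (div_le_iff₀' (by exact_mod_cast hn)).1 hω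
      simp only [hcard, ← tilt_eq_expTilt_left h1pos h2pos l, mul_neg, mul_left_comm _ l,
        Finset.sum_neg_distrib, ← Finset.mul_sum]
      rw [← tiltedMeanLLR]
      exact neg_le_neg (mul_le_mul_of_nonneg_left hS hl)
  rwa [hcard, ← tilt_eq_expTilt_left h1pos h2pos l] at h

lemma prodProb_tiltedMeanLLR_le_S1_div [Nonempty 𝒳] (h2sum : ∑ x, P₂ x = 1) (hl : l ≤ 1) :
    prodProb P₂ {ω : Fin N → 𝒳 | tiltedMeanLLR P₁ P₂ l ≤ S1 P₁ P₂ n ω / n}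
      ≤ exp (-(kl (tilt P₁ P₂ l) P₂ * n)) := by
  have hcard := card_filter_val_lt_of_le hnN
  have h := prodProb_le_exp_neg_kl_expTilt h2pos (fun x => (1 - l) * log (P₁ x / P₂ x)) h2sum
    (Finset.univ.filter fun i : Fin N => (i : ℕ) < n)
    (S := {ω | tiltedMeanLLR P₁ P₂ l ≤ S1 P₁ P₂ n ω / n}) fun ω (hω : _ ≤ _ / (n : ℝ)) => by
      have hS : n * tiltedMeanLLR P₁ P₂ l ≤ S1 P₁ P₂ n ω :=
        (le_div_iff₀' (by exact_mod_cast hn)).1 hω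
      simp only [hcard, ← tilt_eq_expTilt_right h1pos h2pos l, mul_left_comm _ (1 - l),
        ← Finset.mul_sum]
      rw [← tiltedMeanLLR]
      exact mul_le_mul_of_nonneg_left hS (sub_nonneg.2 hl)
  rwa [hcard, ← tilt_eq_expTilt_right h1pos h2pos l] at h

end tilt

section converse

variable {Q P : 𝒳 → ℝ}

/-- Large-deviation upper tail for the empirical mean: the exponential moment
`s ↦ E[e^{s (h - μ - η)}]` equals `1` at `s = 0` with derivative `-η`, so it is below `1` for some
`s > 0` and the Chernoff bound decays geometrically. -/
lemma tendsto_prodProb_mean_add_lt_sum (hQ : ∀ x, 0 ≤ Q x) (hsum : ∑ x, Q x = 1)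
    (h : 𝒳 → ℝ) {η : ℝ} (hη : 0 < η) :
    Tendsto (fun n : ℕ => prodProb Q {ω : Fin n → 𝒳 | n * (∑ x, Q x * h x + η) < ∑ i, h (ω i)})
      atTop (𝓝 0) := by
  set μ := ∑ x, Q x * h x
  set M : ℝ → ℝ := fun s => ∑ x, Q x * exp (s * (h x - μ - η))
  have hM : HasDerivAt M (-η) 0 := by
    refine (HasDerivAt.fun_sum (u := Finset.univ) fun x _ =>
      ((hasDerivAt_mul_const (h x - μ - η)).exp).const_mul (Q x)).congr_deriv ?_
    simp [mul_sub, Finset.sum_sub_distrib, ← Finset.sum_mul, hsum, μ]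
  have hM0 : M 0 = 1 := by simp [M, hsum]
  obtain ⟨s, hslope, hs⟩ := ((hM.hasDerivWithinAt (s := Set.Ioi 0)).limsup_slope_le'
    (lt_irrefl 0) (neg_lt_zero.2 hη) |>.and self_mem_nhdsWithin).exists
  have hMs : M s < 1 := by
    rw [slope_def_field, sub_zero, div_lt_iff₀ hs, zero_mul, hM0] at hslope
    linarith
  have hMs0 : 0 ≤ M s := Finset.sum_nonneg fun x _ => mul_nonneg (hQ x) (exp_pos _).le
  refine tendsto_of_tendsto_of_tendsto_of_le_of_le tendsto_const_nhds
    (tendsto_pow_atTop_nhds_zero_of_lt_one hMs0 hMs) (fun n => prodProb.nonneg hQ _)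
    fun n => ?_
  have hb := prodProb.le_mgf_pow_of_nonneg_sum hQ hsum (fun x => s * (h x - μ - η)) Finset.univ
    (S := {ω : Fin n → 𝒳 | n * (μ + η) < ∑ i, h (ω i)})
    fun ω (hω : (n : ℝ) * (μ + η) < ∑ i, h (ω i)) => by
      rw [← Finset.mul_sum]
      refine mul_nonneg hs.le ?_
      simp only [Finset.sum_sub_distrib, Finset.sum_const, Finset.card_univ, Fintype.card_fin,
        nsmul_eq_mul]
      linarith
  simpa only [Finset.card_univ, Fintype.card_fin] using hb

lemma prodProb_le_exp_mul_add (hQ : ∀ x, 0 < Q x) (hP : ∀ x, 0 < P x) {n : ℕ}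
    (R : Set (Fin n → 𝒳)) (c : ℝ) :
    prodProb Q R ≤ exp c * prodProb P R
      + prodProb Q {ω : Fin n → 𝒳 | c < ∑ i, log (Q (ω i) / P (ω i))} := by
  set T := {ω : Fin n → 𝒳 | c < ∑ i, log (Q (ω i) / P (ω i))}
  refine (prodProb.union_le_union (fun x => (hQ x).le) (T := R ∩ Tᶜ) (U := T) fun ω hω => ?_).trans
    (add_le_add ?_ le_rfl)
  · by_cases hT : ω ∈ T
    exacts [Or.inr hT, Or.inl ⟨hω, hT⟩]
  rw [prodProb, prodProb, Finset.mul_sum]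
  refine Finset.sum_le_sum fun ω _ => ?_
  rw [← Set.indicator_const_mul]
  by_cases hω : ω ∈ R ∩ Tᶜ
  · rw [Set.indicator_of_mem hω, Set.indicator_of_mem hω.1]
    have hprod : ∏ i, Q (ω i) = exp (∑ i, log (Q (ω i) / P (ω i))) * ∏ i, P (ω i) := by
      rw [exp_sum, ← Finset.prod_mul_distrib]
      exact Finset.prod_congr rfl fun i _ => by
        rw [exp_log (div_pos (hQ _) (hP _)), div_mul_cancel₀ _ (hP _).ne']
    rw [hprod]
    exact mul_le_mul_of_nonneg_right (exp_le_exp.2 (not_lt.1 hω.2))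
      (Finset.prod_nonneg fun i _ => (hP _).le)
  · rw [Set.indicator_of_notMem hω]
    exact Set.indicator_nonneg (fun _ _ =>
      mul_nonneg (exp_pos c).le (Finset.prod_nonneg fun i _ => (hP _).le)) _

lemma prodProb_le_exp_neg_add_of_prodProb_le (hQ : ∀ x, 0 < Q x) (hP : ∀ x, 0 < P x) {n : ℕ}
    {R : Set (Fin n → 𝒳)} {E η : ℝ} (hE : kl Q P + 3 * η ≤ E)
    (hR : prodProb P R ≤ exp (-((E - η) * n))) :
    prodProb Q R ≤ exp (-(η * n))
      + prodProb Q {ω : Fin n → 𝒳 | n * (kl Q P + η) < ∑ i, log (Q (ω i) / P (ω i))} := by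
  refine (prodProb_le_exp_mul_add hQ hP R _).trans (add_le_add ?_ le_rfl)
  calc exp (n * (kl Q P + η)) * prodProb P R
      ≤ exp (n * (kl Q P + η)) * exp (-((E - η) * n)) := by gcongr
    _ ≤ exp (-(η * n)) := by
      rw [← exp_add]
      exact exp_le_exp.2 (by nlinarith [(Nat.cast_nonneg n : (0 : ℝ) ≤ n)])

/-- The three decision regions cover the sample space, so their `Q`-probabilities add up to at
least `1`; on `Q`-typical sequences a change of measure bounds each of them by
`e^{n (D(Q‖Pᵢ) + η)}` times its `Pᵢ`-probability, which is exponentially small if all three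
inequalities fail. -/
theorem RejAchievable.le_kl_or_le_kl_or_le_min_kl {P₁ P₂ : 𝒳 → ℝ} {E₁ E₂ γ : ℝ}
    (hach : RejAchievable P₁ P₂ E₁ E₂ γ) (h1pos : ∀ x, 0 < P₁ x) (h2pos : ∀ x, 0 < P₂ x)
    (hQ : ∀ x, 0 < Q x) (hQsum : ∑ x, Q x = 1) :
    E₁ ≤ kl Q P₁ ∨ E₂ ≤ kl Q P₂ ∨ γ ≤ min (kl Q P₁) (kl Q P₂) := by
  by_contra! h
  obtain ⟨hf, hg, hm⟩ := h
  obtain ⟨η, hη, hηf, hηg, hηm⟩ : ∃ η > 0, kl Q P₁ + 3 * η ≤ E₁ ∧ kl Q P₂ + 3 * η ≤ E₂ ∧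
      min (kl Q P₁) (kl Q P₂) + 3 * η ≤ γ := by
    obtain ⟨d, hd, hd₁, hd₂, hd₃⟩ : ∃ d > 0, d ≤ E₁ - kl Q P₁ ∧ d ≤ E₂ - kl Q P₂ ∧
        d ≤ γ - min (kl Q P₁) (kl Q P₂) :=
      ⟨_, lt_min (sub_pos.2 hf) (lt_min (sub_pos.2 hg) (sub_pos.2 hm)), min_le_left _ _,
        (min_le_right _ _).trans (min_le_left _ _), (min_le_right _ _).trans (min_le_right _ _)⟩
    exact ⟨d / 3, by positivity, by linarith, by linarith, by linarith⟩
  set ε : (𝒳 → ℝ) → ℕ → ℝ := fun P n =>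
    prodProb Q {ω : Fin n → 𝒳 | n * (kl Q P + η) < ∑ i, log (Q (ω i) / P (ω i))}
  have hε : ∀ P, Tendsto (ε P) atTop (𝓝 0) := fun P =>
    tendsto_prodProb_mean_add_lt_sum (fun x => (hQ x).le) hQsum _ hη
  have hlim : Tendsto (fun n : ℕ => 3 * exp (-(η * n)) + 2 * (ε P₁ n + ε P₂ n)) atTop (𝓝 0) := by
    simpa using ((tendsto_exp_neg_atTop_nhds_zero.comp
      (tendsto_natCast_atTop_atTop.const_mul_atTop hη)).const_mul 3).add
        (((hε P₁).add (hε P₂)).const_mul 2)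
  obtain ⟨n₀, hn₀⟩ := hach.2.2.2 η hη
  obtain ⟨n, hsmall, hn⟩ :=
    ((hlim.eventually (gt_mem_nhds one_pos)).and (eventually_ge_atTop n₀)).exists
  obtain ⟨A1, A2, AΩ, -, -, -, hcover, h1, h2, hΩ⟩ := hn₀ n hn
  have hQ0 : ∀ x, 0 ≤ Q x := fun x => (hQ x).le
  have htotal := prodProb.one_le_add_add hQ0 hQsum hcover
  have hA1 := prodProb_le_exp_neg_add_of_prodProb_le hQ h2pos hηg h2
  have hA2 := prodProb_le_exp_neg_add_of_prodProb_le hQ h1pos hηf h1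
  have hAΩ : prodProb Q AΩ ≤ exp (-(η * n)) + (ε P₁ n + ε P₂ n) := by
    have hε0 : ∀ P, 0 ≤ ε P n := fun P => prodProb.nonneg hQ0 _
    rcases min_choice (kl Q P₁) (kl Q P₂) with hmin | hmin <;> rw [hmin] at hηm
    · have := prodProb_le_exp_neg_add_of_prodProb_le hQ h1pos hηm
        (by linarith [prodProb.nonneg (fun x => (h2pos x).le) AΩ])
      linarith [hε0 P₂]
    · have := prodProb_le_exp_neg_add_of_prodProb_le hQ h2pos hηm
        (by linarith [prodProb.nonneg (fun x => (h1pos x).le) AΩ])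
      linarith [hε0 P₁]
  linarith

end converse

/-- The largest `l ∈ [0, 1]` with `b ≤ g l` also has `a ≤ f l`: `a ≤ f` holds on the right of it
and passes to the limit. -/
lemma exists_mem_Icc_le_and_le {f g : ℝ → ℝ} (hf : Continuous f) (hg : Continuous g) {a b : ℝ}
    (h0 : b ≤ g 0) (h1 : g 1 < b) (h : ∀ l ∈ Set.Icc (0 : ℝ) 1, g l < b → a ≤ f l) :
    ∃ l ∈ Set.Icc (0 : ℝ) 1, b ≤ g l ∧ a ≤ f l := by
  have hS : IsCompact (Set.Icc (0 : ℝ) 1 ∩ {l | b ≤ g l}) :=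
    isCompact_Icc.inter_right (isClosed_le continuous_const hg)
  obtain ⟨l, ⟨hl, hbl⟩, hmax⟩ := hS.exists_isGreatest ⟨0, ⟨le_rfl, zero_le_one⟩, h0⟩
  have hl1 : l ≠ 1 := by rintro rfl; exact h1.not_ge hbl
  have hright : Set.Ioc l 1 ⊆ {u | a ≤ f u} := fun u ⟨hlu, hu1⟩ =>
    h u ⟨hl.1.trans hlu.le, hu1⟩
      (not_le.1 fun hbu => hlu.not_ge (hmax ⟨⟨hl.1.trans hlu.le, hu1⟩, hbu⟩))
  have hclosure := (isClosed_le continuous_const hf).closure_subset_iff.2 hright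
  rw [closure_Ioc hl1] at hclosure
  exact ⟨l, hl, hbl, hclosure ⟨le_rfl, hl.2⟩⟩

theorem RejAchievable.exists_tilt_params [Nonempty 𝒳] {P₁ P₂ : 𝒳 → ℝ} {E₁ E₂ γ : ℝ}
    (hach : RejAchievable P₁ P₂ E₁ E₂ γ) (h1pos : ∀ x, 0 < P₁ x) (h2pos : ∀ x, 0 < P₂ x)
    (h1sum : ∑ x, P₁ x = 1) (h2sum : ∑ x, P₂ x = 1) (hγ : 0 < γ) (hE₁ : 0 < E₁) (hE₂ : 0 < E₂) :
    ∃ la ∈ Set.Icc (0 : ℝ) 1, ∃ lb ∈ Set.Icc (0 : ℝ) 1,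
      E₂ ≤ kl (tilt P₁ P₂ la) P₂ ∧ E₁ ≤ kl (tilt P₁ P₂ lb) P₁ ∧
      (tiltedMeanLLR P₁ P₂ la ≤ tiltedMeanLLR P₁ P₂ lb ∨
        γ ≤ kl (tilt P₁ P₂ la) P₁ ∧ γ ≤ kl (tilt P₁ P₂ lb) P₂) := by
  set f := fun l => kl (tilt P₁ P₂ l) P₁
  set g := fun l => kl (tilt P₁ P₂ l) P₂
  have hf : Continuous f := continuous_kl_tilt h1pos h2pos h1pos
  have hg : Continuous g := continuous_kl_tilt h1pos h2pos h2pos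
  have htri : ∀ l, E₁ ≤ f l ∨ E₂ ≤ g l ∨ γ ≤ min (f l) (g l) := fun l =>
    hach.le_kl_or_le_kl_or_le_min_kl h1pos h2pos (tilt_pos h1pos h2pos l) (sum_tilt h1pos h2pos l)
  have hgf : ∀ l, g l < E₂ → min E₁ γ ≤ f l := fun l hgl => by
    rcases htri l with h | h | h
    exacts [min_le_of_left_le h, absurd h hgl.not_ge,
      min_le_of_right_le (h.trans (min_le_left _ _))]
  have hfg : ∀ l, f l < E₁ → min E₂ γ ≤ g l := fun l hfl => by
    rcases htri l with h | h | h
    exacts [absurd h hfl.not_ge, min_le_of_left_le h,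
      min_le_of_right_le (h.trans (min_le_right _ _))]
  have hf0 : f 0 = 0 := by simp only [f, tilt_zero h1sum, kl_self h1pos]
  have hg1 : g 1 = 0 := by simp only [g, tilt_one h2sum, kl_self h2pos]
  obtain ⟨la, hla, hgla, hfla⟩ := exists_mem_Icc_le_and_le (a := min E₁ γ) (b := E₂) hf hg
    (not_lt.1 fun h => (hgf 0 h).not_gt (by rw [hf0]; exact lt_min hE₁ hγ))
    (by rw [hg1]; exact hE₂) fun l _ => hgf l
  have hflip : Continuous fun l : ℝ => 1 - l := continuous_const.sub continuous_id
  obtain ⟨l', hl', hfl', hgl'⟩ := exists_mem_Icc_le_and_le (a := min E₂ γ) (b := E₁)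
    (hg.comp hflip) (hf.comp hflip)
    (by rw [Function.comp_apply, sub_zero]
        exact not_lt.1 fun h => (hfg 1 h).not_gt (by rw [hg1]; exact lt_min hE₂ hγ))
    (by rw [Function.comp_apply, sub_self, hf0]; exact hE₁) fun l _ => hfg (1 - l)
  have hlb : 1 - l' ∈ Set.Icc (0 : ℝ) 1 := ⟨sub_nonneg.2 hl'.2, sub_le_self _ hl'.1⟩
  by_cases hfa : E₁ ≤ f la
  · exact ⟨la, hla, la, hla, hgla, hfa, Or.inl le_rfl⟩
  by_cases hgb : E₂ ≤ g (1 - l')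
  · exact ⟨1 - l', hlb, 1 - l', hlb, hgb, hfl', Or.inl le_rfl⟩
  exact ⟨la, hla, 1 - l', hlb, hgla, hfl', Or.inr
    ⟨(min_le_iff.1 hfla).resolve_left hfa, (min_le_iff.1 hgl').resolve_left hgb⟩⟩

noncomputable def bhattacharyya (P₁ P₂ : 𝒳 → ℝ) : ℝ := ∑ x, √(P₁ x * P₂ x)

section bhattacharyya

variable {P₁ P₂ : 𝒳 → ℝ}

lemma bhattacharyya_comm : bhattacharyya P₁ P₂ = bhattacharyya P₂ P₁ := by
  simp only [bhattacharyya, mul_comm]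

lemma bhattacharyya_pos [Nonempty 𝒳] (h1pos : ∀ x, 0 < P₁ x) (h2pos : ∀ x, 0 < P₂ x) :
    0 < bhattacharyya P₁ P₂ :=
  Finset.sum_pos (fun x _ => sqrt_pos.2 (mul_pos (h1pos x) (h2pos x))) univ_nonempty

/-- `2 - 2 ∑ √(P₁ P₂) = ∑ (√P₁ - √P₂)²`. -/
lemma bhattacharyya_lt_one (h1pos : ∀ x, 0 < P₁ x) (h2pos : ∀ x, 0 < P₂ x)
    (h1sum : ∑ x, P₁ x = 1) (h2sum : ∑ x, P₂ x = 1) (hne : P₁ ≠ P₂) :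
    bhattacharyya P₁ P₂ < 1 := by
  have hsq : ∀ x, (√(P₁ x) - √(P₂ x)) ^ 2 = P₁ x + P₂ x - 2 * √(P₁ x * P₂ x) := fun x => by
    rw [sub_sq, sq_sqrt (h1pos x).le, sq_sqrt (h2pos x).le, sqrt_mul (h1pos x).le]
    ring
  obtain ⟨x₀, hx₀⟩ := Function.ne_iff.1 hne
  have hpos : 0 < ∑ x, (√(P₁ x) - √(P₂ x)) ^ 2 :=
    Finset.sum_pos' (fun _ _ => sq_nonneg _) ⟨x₀, mem_univ _, by
      have := sub_ne_zero.2 ((sqrt_inj (h1pos x₀).le (h2pos x₀).le).not.2 hx₀)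
      positivity⟩
  simp only [hsq, Finset.sum_sub_distrib, Finset.sum_add_distrib, h1sum, h2sum,
    ← Finset.mul_sum] at hpos
  rw [bhattacharyya]
  linarith

lemma mul_exp_half_log_div {p q : ℝ} (hp : 0 < p) (hq : 0 < q) :
    q * exp (log (p / q) / 2) = √(p * q) := by
  rw [exp_half, exp_log (div_pos hp hq)]
  nth_rw 1 [← sqrt_sq hq.le]
  rw [← sqrt_mul (sq_nonneg q)]
  congr 1
  field_simp

/-- Chernoff's bound with parameter `1/2`. -/
lemma prodProb_le_bhattacharyya_pow {P P' : 𝒳 → ℝ} (hP : ∀ x, 0 < P x) (hP' : ∀ x, 0 < P' x)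
    (hsum : ∑ x, P x = 1) {N : ℕ} (I : Finset (Fin N)) {S : Set (Fin N → 𝒳)}
    (hS : ∀ ω ∈ S, 0 ≤ ∑ i ∈ I, log (P' (ω i) / P (ω i))) :
    prodProb P S ≤ bhattacharyya P' P ^ I.card := by
  have h := prodProb.le_mgf_pow_of_nonneg_sum (fun x => (hP x).le) hsum
    (fun x => log (P' x / P x) / 2) I fun ω hω => by
      rw [← Finset.sum_div]; exact div_nonneg (hS ω hω) zero_le_two
  simpa only [mul_exp_half_log_div (hP' _) (hP _), bhattacharyya] using h

variable {N n : ℕ} (h1pos : ∀ x, 0 < P₁ x) (h2pos : ∀ x, 0 < P₂ x) (hnN : n ≤ N)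
include h1pos h2pos hnN

lemma prodProb_nonneg_S2_le (h2sum : ∑ x, P₂ x = 1) :
    prodProb P₂ {ω : Fin N → 𝒳 | 0 ≤ S2 P₁ P₂ n ω} ≤ bhattacharyya P₁ P₂ ^ (N - n) := by
  rw [← card_filter_le_val hnN]
  exact prodProb_le_bhattacharyya_pow h2pos h1pos h2sum _ fun ω hω => hω

lemma prodProb_S2_neg_le (h1sum : ∑ x, P₁ x = 1) :
    prodProb P₁ {ω : Fin N → 𝒳 | S2 P₁ P₂ n ω < 0} ≤ bhattacharyya P₁ P₂ ^ (N - n) := by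
  rw [← card_filter_le_val hnN, bhattacharyya_comm]
  refine prodProb_le_bhattacharyya_pow h1pos h2pos h1sum _ fun ω (hω : S2 P₁ P₂ n ω < 0) => ?_
  have hswap : ∀ a b : ℝ, log (b / a) = -log (a / b) := fun a b => by rw [← log_inv, inv_div]
  simp only [hswap (P₁ _), Finset.sum_neg_distrib]
  exact neg_nonneg.2 hω.le

end bhattacharyya

def HypTest.ofFixedLength {N : ℕ} (A : Set (Fin N → 𝒳)) : HypTest 𝒳 N where
  τ _ := N
  A1 := A
  A2 := Aᶜ
  tau_le _ := le_rfl
  stopping _ _ _ := rfl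
  adapted1 _ _ h := by rw [funext fun i => h i i.isLt]
  adapted2 _ _ h := by rw [funext fun i => h i i.isLt]
  disj := disjoint_compl_right
  exhaust := Set.union_compl_self A

section twoPhase

omit [Fintype 𝒳]

variable {P₁ P₂ : 𝒳 → ℝ} {k n : ℕ} {α₁ β₁ : ℝ}

lemma S1_congr {N : ℕ} {ω ω' : Fin N → 𝒳} (h : ∀ i : Fin N, (i : ℕ) < n → ω i = ω' i) :
    S1 P₁ P₂ n ω = S1 P₁ P₂ n ω' :=
  Finset.sum_congr rfl fun i hi => by rw [h i (Finset.mem_filter.1 hi).2]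

lemma eq_or_S1_eq_of_agree_lt_twoPhaseTau {ω ω' : Fin ((k + 1) * n) → 𝒳}
    (h : ∀ i : Fin ((k + 1) * n), (i : ℕ) < twoPhaseTau P₁ P₂ k n α₁ β₁ ω → ω i = ω' i) :
    ω = ω' ∨ ¬(β₁ < S1 P₁ P₂ n ω / n ∧ S1 P₁ P₂ n ω / n < α₁) ∧
      S1 P₁ P₂ n ω' = S1 P₁ P₂ n ω := by
  unfold twoPhaseTau at h
  split_ifs at h with hmid
  exacts [Or.inl (funext fun i => h i i.isLt), Or.inr ⟨hmid, (S1_congr h).symm⟩]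

noncomputable def twoPhaseTest (P₁ P₂ : 𝒳 → ℝ) (k n : ℕ) {α₁ β₁ : ℝ} (α : ℝ) (h : β₁ < α₁) :
    HypTest 𝒳 ((k + 1) * n) where
  τ := twoPhaseTau P₁ P₂ k n α₁ β₁
  A1 := twoPhaseA1 P₁ P₂ k n α₁ β₁ α
  A2 := twoPhaseA2 P₁ P₂ k n α₁ β₁ α
  tau_le ω := by
    unfold twoPhaseTau
    split_ifs
    exacts [le_rfl, Nat.le_mul_of_pos_left n k.succ_pos]
  stopping _ _ h := by
    rcases eq_or_S1_eq_of_agree_lt_twoPhaseTau h with rfl | ⟨hmid, hS⟩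
    · rfl
    · simp only [twoPhaseTau, hS, if_neg hmid]
  adapted1 _ _ h := by
    rcases eq_or_S1_eq_of_agree_lt_twoPhaseTau h with rfl | ⟨hmid, hS⟩
    · rfl
    · simp only [twoPhaseA1, Set.mem_ofPred_eq, hS]
      exact or_congr_right
        ⟨fun h' => absurd ⟨h'.1, h'.2.1⟩ hmid, fun h' => absurd ⟨h'.1, h'.2.1⟩ hmid⟩
  adapted2 _ _ h := by
    rcases eq_or_S1_eq_of_agree_lt_twoPhaseTau h with rfl | ⟨hmid, hS⟩
    · rfl
    · simp only [twoPhaseA2, Set.mem_ofPred_eq, hS]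
      exact or_congr_right
        ⟨fun h' => absurd ⟨h'.1, h'.2.1⟩ hmid, fun h' => absurd ⟨h'.1, h'.2.1⟩ hmid⟩
  disj := Set.disjoint_left.2 fun ω h1 h2 => by
    rcases h1 with h1 | ⟨h1, h1', h1''⟩ <;> rcases h2 with h2 | ⟨h2, h2', h2''⟩ <;> linarith
  exhaust := Set.eq_univ_of_forall fun ω => by
    by_cases ha : α₁ ≤ S1 P₁ P₂ n ω / n
    · exact Or.inl (Or.inl ha)
    by_cases hb : S1 P₁ P₂ n ω / n ≤ β₁
    · exact Or.inr (Or.inl hb)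
    rcases le_or_gt α (S2 P₁ P₂ n ω / (k * n)) with hα | hα
    exacts [Or.inl (Or.inr ⟨not_le.1 hb, not_le.1 ha, hα⟩),
      Or.inr (Or.inr ⟨not_le.1 hb, not_le.1 ha, hα⟩)]

lemma setOf_lt_twoPhaseTau_subset :
    {ω | n < twoPhaseTau P₁ P₂ k n α₁ β₁ ω}
      ⊆ {ω | β₁ < S1 P₁ P₂ n ω / n ∧ S1 P₁ P₂ n ω / n < α₁} := fun ω (hω : n < _) => by
  by_contra hmid
  simp only [twoPhaseTau, if_neg (show ¬(_ ∧ _) from hmid), lt_irrefl] at hω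

lemma twoPhaseA1_subset (hkn : 0 < k * n) :
    twoPhaseA1 P₁ P₂ k n α₁ β₁ 0
      ⊆ {ω | α₁ ≤ S1 P₁ P₂ n ω / n} ∪ {ω | 0 ≤ S2 P₁ P₂ n ω} := by
  rintro ω (h | ⟨-, -, h⟩)
  exacts [Or.inl h, Or.inr (by simpa using (le_div_iff₀ (by exact_mod_cast hkn)).1 h)]

lemma twoPhaseA2_subset (hkn : 0 < k * n) :
    twoPhaseA2 P₁ P₂ k n α₁ β₁ 0
      ⊆ {ω | S1 P₁ P₂ n ω / n ≤ β₁} ∪ {ω | S2 P₁ P₂ n ω < 0} := by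
  rintro ω (h | ⟨-, -, h⟩)
  exacts [Or.inl h, Or.inr (by simpa using (div_lt_iff₀ (by exact_mod_cast hkn)).1 h)]

end twoPhase

lemma pow_mul_le_exp_neg {ρ E : ℝ} (hρ : 0 < ρ) {k : ℕ} (h : E ≤ k * -log ρ) (n : ℕ) :
    ρ ^ (k * n) ≤ exp (-(E * n)) := by
  rw [← exp_log hρ, ← exp_nat_mul, Nat.cast_mul]
  exact exp_le_exp.2 (by nlinarith [(Nat.cast_nonneg n : (0 : ℝ) ≤ n)])

lemma two_mul_exp_neg_le {E δ x : ℝ} (h : 1 ≤ δ * x) :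
    2 * exp (-(E * x)) ≤ exp (-((E - δ) * x)) :=
  calc 2 * exp (-(E * x)) ≤ exp (δ * x) * exp (-(E * x)) := by
        gcongr; linarith [add_one_le_exp (δ * x)]
    _ = exp (-((E - δ) * x)) := by rw [← exp_add]; ring_nf

section achievability

variable {P₁ P₂ : 𝒳 → ℝ} {γ E₁ E₂ : ℝ}

/-- The factor `2` is absorbed by the slack `δ` once `n ≥ 1/δ`. -/
lemma aflAchievable_of_forall_exists_test (hE₁ : 0 ≤ E₁) (hE₂ : 0 ≤ E₂) {c : ℕ} (hc : 0 < c)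
    (h : ∀ n, 0 < n → ∃ N ≤ c * n, ∃ T : HypTest 𝒳 N,
      prodProb P₁ {ω | n < T.τ ω} ≤ exp (-(γ * n)) ∧
      prodProb P₂ {ω | n < T.τ ω} ≤ exp (-(γ * n)) ∧
      prodProb P₁ T.A2 ≤ 2 * exp (-(E₁ * n)) ∧ prodProb P₂ T.A1 ≤ 2 * exp (-(E₂ * n))) :
    AFLAchievable P₁ P₂ γ E₁ E₂ := by
  refine ⟨hE₁, hE₂, c, by exact_mod_cast hc, 1, one_pos, fun δ hδ => ⟨max 1 ⌈δ⁻¹⌉₊, fun n hn => ?_⟩⟩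
  have hn1 : 0 < n := lt_of_lt_of_le one_pos (le_of_max_le_left hn)
  have hδn : 1 ≤ δ * n := by
    rw [← inv_le_iff_one_le_mul₀' hδ]
    exact (Nat.le_ceil _).trans (by exact_mod_cast le_of_max_le_right hn)
  obtain ⟨N, hN, T, h1, h2, h3, h4⟩ := h n hn1
  exact ⟨N, by rw [pow_one]; exact_mod_cast hN, T, h1, h2,
    h3.trans (two_mul_exp_neg_le hδn), h4.trans (two_mul_exp_neg_le hδn)⟩

lemma prodProb_setOf_lt_ofFixedLength {P : 𝒳 → ℝ} {n : ℕ} (A : Set (Fin n → 𝒳)) :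
    prodProb P {ω | n < (HypTest.ofFixedLength A).τ ω} = 0 := by
  simp [HypTest.ofFixedLength, prodProb]

lemma aflAchievable_zero_left (h1sum : ∑ x, P₁ x = 1) (hE₂ : 0 ≤ E₂) :
    AFLAchievable P₁ P₂ γ 0 E₂ :=
  aflAchievable_of_forall_exists_test le_rfl hE₂ one_pos fun n _ =>
    ⟨n, (one_mul n).ge, HypTest.ofFixedLength ∅,
      (prodProb_setOf_lt_ofFixedLength _).trans_le (exp_pos _).le,
      (prodProb_setOf_lt_ofFixedLength _).trans_le (exp_pos _).le,
      by simp [HypTest.ofFixedLength, prodProb.univ_eq_one h1sum],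
      by simp only [HypTest.ofFixedLength, prodProb, Set.indicator_empty, Finset.sum_const_zero]
         positivity⟩

lemma aflAchievable_zero_right (h2sum : ∑ x, P₂ x = 1) (hE₁ : 0 ≤ E₁) :
    AFLAchievable P₁ P₂ γ E₁ 0 :=
  aflAchievable_of_forall_exists_test hE₁ le_rfl one_pos fun n _ =>
    ⟨n, (one_mul n).ge, HypTest.ofFixedLength Set.univ,
      (prodProb_setOf_lt_ofFixedLength _).trans_le (exp_pos _).le,
      (prodProb_setOf_lt_ofFixedLength _).trans_le (exp_pos _).le,
      by simp only [HypTest.ofFixedLength, Set.compl_univ, prodProb, Set.indicator_empty,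
           Finset.sum_const_zero]
         positivity,
      by simp [HypTest.ofFixedLength, prodProb.univ_eq_one h2sum]⟩

end achievability

section tiltedTests

variable [Nonempty 𝒳] {P₁ P₂ : 𝒳 → ℝ} (h1pos : ∀ x, 0 < P₁ x) (h2pos : ∀ x, 0 < P₂ x)
  (h1sum : ∑ x, P₁ x = 1) (h2sum : ∑ x, P₂ x = 1) {γ E₁ E₂ : ℝ} (hE₁ : 0 ≤ E₁) (hE₂ : 0 ≤ E₂)
  {la lb : ℝ} (hla : la ∈ Set.Icc (0 : ℝ) 1) (hlb : lb ∈ Set.Icc (0 : ℝ) 1)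
  (hga : E₂ ≤ kl (tilt P₁ P₂ la) P₂) (hfb : E₁ ≤ kl (tilt P₁ P₂ lb) P₁)
include h1pos h2pos h1sum h2sum hE₁ hE₂ hla hlb hga hfb

/-- When the thresholds are ordered, a fixed-length likelihood-ratio test suffices. -/
lemma aflAchievable_of_tiltedMeanLLR_le (hab : tiltedMeanLLR P₁ P₂ la ≤ tiltedMeanLLR P₁ P₂ lb) :
    AFLAchievable P₁ P₂ γ E₁ E₂ :=
  aflAchievable_of_forall_exists_test hE₁ hE₂ one_pos fun n hn =>
    ⟨n, (one_mul n).ge, HypTest.ofFixedLength {ω | tiltedMeanLLR P₁ P₂ la ≤ S1 P₁ P₂ n ω / n},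
      (prodProb_setOf_lt_ofFixedLength _).trans_le (exp_pos _).le,
      (prodProb_setOf_lt_ofFixedLength _).trans_le (exp_pos _).le,
      calc _ ≤ prodProb P₁ {ω : Fin n → 𝒳 | S1 P₁ P₂ n ω / n ≤ tiltedMeanLLR P₁ P₂ lb} :=
            prodProb.mono (fun x => (h1pos x).le) fun ω hω => (not_le.1 hω).le.trans hab
        _ ≤ exp (-(kl (tilt P₁ P₂ lb) P₁ * n)) :=
            prodProb_S1_div_le_tiltedMeanLLR h1pos h2pos hn le_rfl h1sum hlb.1
        _ ≤ 2 * exp (-(E₁ * n)) := by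
            rw [two_mul]; exact le_add_of_le_of_nonneg (by gcongr) (exp_pos _).le,
      calc _ ≤ exp (-(kl (tilt P₁ P₂ la) P₂ * n)) :=
            prodProb_tiltedMeanLLR_le_S1_div h1pos h2pos hn le_rfl h2sum hla.2
        _ ≤ 2 * exp (-(E₂ * n)) := by
            rw [two_mul]; exact le_add_of_le_of_nonneg (by gcongr) (exp_pos _).le⟩

/-- Otherwise the two-phase test continues on the band between the thresholds; there the second
phase compares the likelihoods of `k n` fresh samples, which errs with probability at most
`ρ^{k n}` for the Bhattacharyya coefficient `ρ < 1`, so a large `k` makes this negligible. -/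
lemma aflAchievable_of_tiltedMeanLLR_lt (hne : P₁ ≠ P₂)
    (hba : tiltedMeanLLR P₁ P₂ lb < tiltedMeanLLR P₁ P₂ la)
    (hγa : γ ≤ kl (tilt P₁ P₂ la) P₁) (hγb : γ ≤ kl (tilt P₁ P₂ lb) P₂) :
    AFLAchievable P₁ P₂ γ E₁ E₂ := by
  set ρ := bhattacharyya P₁ P₂
  have hρ : 0 < ρ := bhattacharyya_pos h1pos h2pos
  have hlogρ : 0 < -log ρ :=
    neg_pos.2 (log_neg hρ (bhattacharyya_lt_one h1pos h2pos h1sum h2sum hne))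
  obtain ⟨k, hk⟩ := exists_nat_gt ((E₁ + E₂) / -log ρ)
  have hk0 : 0 < k := by exact_mod_cast (div_nonneg (add_nonneg hE₁ hE₂) hlogρ.le).trans_lt hk
  have hk' := (div_lt_iff₀ hlogρ).1 hk
  refine aflAchievable_of_forall_exists_test hE₁ hE₂ k.succ_pos fun n hn =>
    ⟨(k + 1) * n, le_rfl, twoPhaseTest P₁ P₂ k n 0 hba, ?_, ?_, ?_, ?_⟩
  all_goals
    have hnN : n ≤ (k + 1) * n := Nat.le_mul_of_pos_left n k.succ_pos
    have hkn : 0 < k * n := Nat.mul_pos hk0 hn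
    have hsub : (k + 1) * n - n = k * n := by rw [add_one_mul, Nat.add_sub_cancel]
  · exact (prodProb.mono (fun x => (h1pos x).le)
      (setOf_lt_twoPhaseTau_subset.trans fun ω h => h.2.le)).trans
      ((prodProb_S1_div_le_tiltedMeanLLR h1pos h2pos hn hnN h1sum hla.1).trans (by gcongr))
  · exact (prodProb.mono (fun x => (h2pos x).le)
      (setOf_lt_twoPhaseTau_subset.trans fun ω h => h.1.le)).trans
      ((prodProb_tiltedMeanLLR_le_S1_div h1pos h2pos hn hnN h2sum hlb.2).trans (by gcongr))
  · refine (prodProb.union_le_union (fun x => (h1pos x).le) (twoPhaseA2_subset hkn)).trans ?_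
    rw [two_mul]
    gcongr
    · exact (prodProb_S1_div_le_tiltedMeanLLR h1pos h2pos hn hnN h1sum hlb.1).trans (by gcongr)
    · exact (hsub ▸ prodProb_S2_neg_le h1pos h2pos hnN h1sum).trans
        (pow_mul_le_exp_neg hρ (by linarith) n)
  · refine (prodProb.union_le_union (fun x => (h2pos x).le) (twoPhaseA1_subset hkn)).trans ?_
    rw [two_mul]
    gcongr
    · exact (prodProb_tiltedMeanLLR_le_S1_div h1pos h2pos hn hnN h2sum hla.2).trans (by gcongr)
    · exact (hsub ▸ prodProb_nonneg_S2_le h1pos h2pos hnN h2sum).trans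
        (pow_mul_le_exp_neg hρ (by linarith) n)

end tiltedTests

end

/-- If `(E₁,E₂,γ)` is achievable by fixed-length tests with rejection, then `(E₁,E₂)`
is achievable by γ-almost-fixed-length tests. -/
theorem rejection_to_afl (P₁ P₂ : 𝒳 → ℝ)
    (h1pos : ∀ x, 0 < P₁ x) (h2pos : ∀ x, 0 < P₂ x)
    (h1sum : ∑ x, P₁ x = 1) (h2sum : ∑ x, P₂ x = 1)
    (hne : P₁ ≠ P₂)
    (γ : ℝ) (hγ : 0 < γ) (E₁ E₂ : ℝ)
    (hach : RejAchievable P₁ P₂ E₁ E₂ γ) :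
    AFLAchievable P₁ P₂ γ E₁ E₂ := by
  have hE₁ : 0 ≤ E₁ := hach.1
  have hE₂ : 0 ≤ E₂ := hach.2.1
  rcases hE₁.eq_or_lt with rfl | hE₁pos
  · exact aflAchievable_zero_left h1sum hE₂
  rcases hE₂.eq_or_lt with rfl | hE₂pos
  · exact aflAchievable_zero_right h2sum hE₁
  obtain ⟨la, hla, lb, hlb, hga, hfb, hsel⟩ :=
    hach.exists_tilt_params h1pos h2pos h1sum h2sum hγ hE₁pos hE₂pos
  by_cases hab : tiltedMeanLLR P₁ P₂ la ≤ tiltedMeanLLR P₁ P₂ lb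
  · exact aflAchievable_of_tiltedMeanLLR_le h1pos h2pos h1sum h2sum hE₁ hE₂ hla hlb hga hfb hab
  · obtain ⟨hγa, hγb⟩ := hsel.resolve_left hab
    exact aflAchievable_of_tiltedMeanLLR_lt h1pos h2pos h1sum h2sum hE₁ hE₂ hla hlb hga hfb hne
      (not_le.1 hab) hγa hγb
end
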